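/- Let n_i, n_j be unit vectors in ℝ³, η ∈ [0,1], α ∈ ℝ and a ∈ ℝ³, and let G_{++}, G_{+-}, G_{-+}, G_{--} be the parametric joint-measurement family with these parameters. Then all four matrices are qubit effects (0 ≤ G ≤ I) if and only if √(2η²(1 + n_i·n_j) + |a|² + 2η|(n_i+n_j)·a|) ≤ α ≤ 2 − √(2η²(1 − n_i·n_j) + |a|² + 2η|(n_i−n_j)·a|). -/

import Mathlib

open Matrix ComplexOrder

noncomputable section

abbrev Mat2 := Matrix (Fin 2) (Fin 2) ℂ

/-- Pauli matrix σ₁. -/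
def σ1 : Mat2 := !![0, 1; 1, 0]
/-- Pauli matrix σ₂. -/
def σ2 : Mat2 := !![0, -Complex.I; Complex.I, 0]
/-- Pauli matrix σ₃. -/
def σ3 : Mat2 := !![1, 0; 0, -1]

/-- σ·a for a real 3-vector a. -/
def pauli (a : Fin 3 → ℝ) : Mat2 := (a 0 : ℂ) • σ1 + (a 1 : ℂ) • σ2 + (a 2 : ℂ) • σ3

/-- Euclidean inner product on ℝ³. -/
def dot3 (a b : Fin 3 → ℝ) : ℝ := a 0 * b 0 + a 1 * b 1 + a 2 * b 2

/-- Euclidean norm on ℝ³. -/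
def norm3 (a : Fin 3 → ℝ) : ℝ := Real.sqrt (dot3 a a)

/-- A qubit effect: both `E` and `I - E` positive semidefinite. -/
def IsEffect (E : Mat2) : Prop := E.PosSemidef ∧ (1 - E).PosSemidef

/-- A qubit density matrix. -/
def IsDensity (ρ : Mat2) : Prop := ρ.PosSemidef ∧ ρ.trace = 1

/-- E₊ = (1/2)(I + η σ·n). -/
def Epos (η : ℝ) (n : Fin 3 → ℝ) : Mat2 := (1/2 : ℂ) • (1 + (η : ℂ) • pauli n)
/-- E₋ = (1/2)(I - η σ·n). -/
def Eneg (η : ℝ) (n : Fin 3 → ℝ) : Mat2 := (1/2 : ℂ) • (1 - (η : ℂ) • pauli n)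

/-- A pairwise joint measurement of the noisy spin-1/2 observables along nᵢ and nⱼ. -/
def IsJointMmt (η : ℝ) (ni nj : Fin 3 → ℝ) (Gpp Gpm Gmp Gmm : Mat2) : Prop :=
  IsEffect Gpp ∧ IsEffect Gpm ∧ IsEffect Gmp ∧ IsEffect Gmm ∧
  Gpp + Gpm = Epos η ni ∧ Gmp + Gmm = Eneg η ni ∧
  Gpp + Gmp = Epos η nj ∧ Gpm + Gmm = Eneg η nj

/-- Average anticorrelation probability R₃(ρ), given the anticorrelation effects of the
three pairwise joint measurements. -/
def R3 (ρ G12pm G12mp G13pm G13mp G23pm G23mp : Mat2) : ℝ :=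
  (1/3) * ((ρ * (G12pm + G12mp)).trace.re + (ρ * (G13pm + G13mp)).trace.re +
    (ρ * (G23pm + G23mp)).trace.re)

/-- Parametric joint-measurement family. -/
def Gpp (η : ℝ) (ni nj : Fin 3 → ℝ) (α : ℝ) (a : Fin 3 → ℝ) : Mat2 :=
  (1/2 : ℂ) • (((α/2 : ℝ) : ℂ) • (1 : Mat2) + pauli ((1/2 : ℝ) • (η • (ni + nj) - a)))
def Gpm (η : ℝ) (ni nj : Fin 3 → ℝ) (α : ℝ) (a : Fin 3 → ℝ) : Mat2 :=
  (1/2 : ℂ) • (((1 - α/2 : ℝ) : ℂ) • (1 : Mat2) + pauli ((1/2 : ℝ) • (η • (ni - nj) + a)))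
def Gmp (η : ℝ) (ni nj : Fin 3 → ℝ) (α : ℝ) (a : Fin 3 → ℝ) : Mat2 :=
  (1/2 : ℂ) • (((1 - α/2 : ℝ) : ℂ) • (1 : Mat2) + pauli ((1/2 : ℝ) • (-(η • ni) + η • nj + a)))
def Gmm (η : ℝ) (ni nj : Fin 3 → ℝ) (α : ℝ) (a : Fin 3 → ℝ) : Mat2 :=
  (1/2 : ℂ) • (((α/2 : ℝ) : ℂ) • (1 : Mat2) + pauli ((1/2 : ℝ) • (-(η • (ni + nj)) - a)))

/-- Trine directions in the ZX plane. -/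
def tn1 : Fin 3 → ℝ := ![0, 0, 1]
def tn2 : Fin 3 → ℝ := ![Real.sqrt 3 / 2, 0, -(1/2)]
def tn3 : Fin 3 → ℝ := ![-(Real.sqrt 3 / 2), 0, -(1/2)]

/-- sign of a Boolean, as ±1. -/
def sgn (b : Bool) : ℝ := if b then 1 else -1

/-- m_X = Σₖ Xₖ nₖ. -/
def mvec {N : ℕ} (n : Fin N → Fin 3 → ℝ) (X : Fin N → Bool) : Fin 3 → ℝ :=
  ∑ k, sgn (X k) • n k

/-- Joint measurability of the N noisy qubit observables. -/
def JointlyMeasurable {N : ℕ} (η : ℝ) (n : Fin N → Fin 3 → ℝ) : Prop :=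
  ∃ E : (Fin N → Bool) → Mat2,
    (∀ X, IsEffect (E X)) ∧ (∑ X, E X) = 1 ∧
    (∀ k, ∑ X ∈ Finset.univ.filter (fun X => X k = true), E X = Epos η (n k)) ∧
    (∀ k, ∑ X ∈ Finset.univ.filter (fun X => X k = false), E X = Eneg η (n k))

/-! A Hermitian 2×2 matrix is positive semidefinite iff its diagonal entries and its determinant
are nonnegative; for `β I + σ·v` this says `|v| ≤ β`. Hence `c (β I + σ·v)` is an effect iff
`|v| ≤ β` and `|v| ≤ 1/c - β`. Each member of the family is of this form with `c = 1/4` and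
`v = u ∓ a`, where `u = η(nᵢ + nⱼ)` for `G₊₊, G₋₋` and `u = η(nᵢ - nⱼ)` for `G₊₋, G₋₊`. The two
conditions on each pair combine through `max(|u - a|, |u + a|)² = |u|² + |a|² + 2|u·a|`, and
`|u|² = 2η²(1 ± nᵢ·nⱼ)` for unit vectors. -/

theorem star_dotProduct_mulVec_fin_two (a d : ℝ) (b : ℂ) (x : Fin 2 → ℂ) :
    star x ⬝ᵥ (!![(a : ℂ), b; star b, (d : ℂ)] *ᵥ x) =
      ((a * Complex.normSq (x 0) + d * Complex.normSq (x 1) +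
        2 * (b * star (x 0) * x 1).re : ℝ) : ℂ) := by
  apply Complex.ext <;>
    simp [dotProduct, Matrix.mulVec, Fin.sum_univ_two, Complex.normSq_apply] <;> ring

theorem posSemidef_fin_two_iff (a d : ℝ) (b : ℂ) :
    (!![(a : ℂ), b; star b, (d : ℂ)]).PosSemidef ↔
      0 ≤ a ∧ 0 ≤ d ∧ Complex.normSq b ≤ a * d := by
  constructor
  · intro h
    have ha : (0 : ℂ) ≤ a := h.diag_nonneg (i := 0)
    have hd : (0 : ℂ) ≤ d := h.diag_nonneg (i := 1)
    have hdet := h.det_nonneg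
    rw [det_fin_two_of, Complex.star_def, Complex.mul_conj] at hdet
    norm_cast at ha hd hdet
    exact ⟨ha, hd, sub_nonneg.mp hdet⟩
  · rintro ⟨ha, hd, hb⟩
    refine .of_dotProduct_mulVec_nonneg ?_ fun x => ?_
    · ext i j
      fin_cases i <;> fin_cases j <;> simp
    rw [star_dotProduct_mulVec_fin_two, Complex.zero_le_real]
    set z := b * star (x 0) * x 1
    have hz : z.re ^ 2 ≤ (a * Complex.normSq (x 0)) * (d * Complex.normSq (x 1)) := calc
      z.re ^ 2 ≤ Complex.normSq z := by
        rw [Complex.normSq_apply]; nlinarith [sq_nonneg z.im]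
      _ = Complex.normSq b * (Complex.normSq (x 0) * Complex.normSq (x 1)) := by
        simp [z, Complex.normSq_mul, mul_assoc]
      _ ≤ a * d * (Complex.normSq (x 0) * Complex.normSq (x 1)) :=
        mul_le_mul_of_nonneg_right hb
          (mul_nonneg (Complex.normSq_nonneg _) (Complex.normSq_nonneg _))
      _ = _ := by ring
    -- AM-GM: `(a|x₀|² + d|x₁|²)² ≥ 4 a|x₀|² d|x₁|² ≥ 4 (Re z)²`
    have h0 := mul_nonneg ha (Complex.normSq_nonneg (x 0))
    have h1 := mul_nonneg hd (Complex.normSq_nonneg (x 1))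
    nlinarith [sq_nonneg (a * Complex.normSq (x 0) - d * Complex.normSq (x 1)),
      sq_nonneg (a * Complex.normSq (x 0) + d * Complex.normSq (x 1) + 2 * z.re)]

theorem smul_one_add_pauli_eq_of (β : ℝ) (v : Fin 3 → ℝ) :
    (β : ℂ) • (1 : Mat2) + pauli v =
      !![((β + v 2 : ℝ) : ℂ), v 0 - v 1 * Complex.I;
        star ((v 0 : ℂ) - v 1 * Complex.I), ((β - v 2 : ℝ) : ℂ)] := by
  ext i j
  fin_cases i <;> fin_cases j <;> simp [pauli, σ1, σ2, σ3] <;> ring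

theorem pauli_neg (v : Fin 3 → ℝ) : pauli (-v) = -pauli v := by
  simp only [pauli, Pi.neg_apply, Complex.ofReal_neg, neg_smul]
  abel

theorem pauli_smul (c : ℝ) (v : Fin 3 → ℝ) : pauli (c • v) = (c : ℂ) • pauli v := by
  simp only [pauli, Pi.smul_apply, smul_eq_mul, Complex.ofReal_mul, smul_add, mul_smul]

theorem dot3_self_nonneg (v : Fin 3 → ℝ) : 0 ≤ dot3 v v := by
  unfold dot3; nlinarith [mul_self_nonneg (v 0), mul_self_nonneg (v 1), mul_self_nonneg (v 2)]

theorem norm3_nonneg (v : Fin 3 → ℝ) : 0 ≤ norm3 v := Real.sqrt_nonneg _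

theorem norm3_neg (v : Fin 3 → ℝ) : norm3 (-v) = norm3 v := by
  simp [norm3, dot3]

theorem posSemidef_smul_one_add_pauli_iff (β : ℝ) (v : Fin 3 → ℝ) :
    ((β : ℂ) • (1 : Mat2) + pauli v).PosSemidef ↔ norm3 v ≤ β := by
  have hb : Complex.normSq ((v 0 : ℂ) - v 1 * Complex.I) = v 0 ^ 2 + v 1 ^ 2 := by
    simp [Complex.normSq_apply]; ring
  rw [smul_one_add_pauli_eq_of, posSemidef_fin_two_iff, hb, norm3, Real.sqrt_le_iff, dot3]
  constructor
  · rintro ⟨h1, h2, h3⟩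
    constructor <;> nlinarith
  · rintro ⟨h1, h2⟩
    refine ⟨?_, ?_, ?_⟩ <;> nlinarith [sq_nonneg (v 0), sq_nonneg (v 1), sq_nonneg (v 2)]

theorem posSemidef_real_smul_iff {n : Type*} [Fintype n] {M : Matrix n n ℂ} {c : ℝ}
    (hc : 0 < c) :
    ((c : ℂ) • M).PosSemidef ↔ M.PosSemidef := by
  refine ⟨fun h => ?_, fun h => h.smul (by exact_mod_cast hc.le)⟩
  have := h.smul (a := ((c⁻¹ : ℝ) : ℂ)) (by exact_mod_cast (inv_pos.mpr hc).le)
  rwa [smul_smul, ← Complex.ofReal_mul, inv_mul_cancel₀ hc.ne', Complex.ofReal_one, one_smul]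
    at this

theorem isEffect_smul_smul_one_add_pauli_iff {c : ℝ} (hc : 0 < c) (β : ℝ) (v : Fin 3 → ℝ) :
    IsEffect ((c : ℂ) • ((β : ℂ) • (1 : Mat2) + pauli v)) ↔
      norm3 v ≤ β ∧ norm3 v ≤ c⁻¹ - β := by
  have hcompl : (1 : Mat2) - (c : ℂ) • ((β : ℂ) • 1 + pauli v) =
      (c : ℂ) • (((c⁻¹ - β : ℝ) : ℂ) • 1 + pauli (-v)) := by
    have : (c : ℂ) * (c : ℂ)⁻¹ = 1 := mul_inv_cancel₀ (by exact_mod_cast hc.ne')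
    rw [pauli_neg, Complex.ofReal_sub, Complex.ofReal_inv]
    linear_combination (norm := module) -(this • (1 : Mat2))
  rw [IsEffect, hcompl, posSemidef_real_smul_iff hc, posSemidef_real_smul_iff hc,
    posSemidef_smul_one_add_pauli_iff, posSemidef_smul_one_add_pauli_iff, norm3_neg]

theorem isEffect_half_smul_pauli_half_iff (β : ℝ) (w : Fin 3 → ℝ) :
    IsEffect ((1/2 : ℂ) • ((β : ℂ) • (1 : Mat2) + pauli ((1/2 : ℝ) • w))) ↔
      norm3 w ≤ 2 * β ∧ norm3 w ≤ 4 - 2 * β := by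
  have h : (1/2 : ℂ) • ((β : ℂ) • (1 : Mat2) + pauli ((1/2 : ℝ) • w)) =
      ((1/4 : ℝ) : ℂ) • (((2 * β : ℝ) : ℂ) • 1 + pauli w) := by
    rw [pauli_smul]; push_cast; module
  rw [h, isEffect_smul_smul_one_add_pauli_iff (by norm_num)]
  norm_num

theorem dot3_smul_left (c : ℝ) (x y : Fin 3 → ℝ) : dot3 (c • x) y = c * dot3 x y := by
  simp only [dot3, Pi.smul_apply, smul_eq_mul]; ring

theorem dot3_smul_right (c : ℝ) (x y : Fin 3 → ℝ) : dot3 x (c • y) = c * dot3 x y := by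
  simp only [dot3, Pi.smul_apply, smul_eq_mul]; ring

theorem dot3_self_of_norm3_eq_one {x : Fin 3 → ℝ} (h : norm3 x = 1) : dot3 x x = 1 :=
  (Real.sqrt_eq_one).mp h

theorem dot3_add_self_of_unit {x y : Fin 3 → ℝ} (hx : norm3 x = 1) (hy : norm3 y = 1) :
    dot3 (x + y) (x + y) = 2 * (1 + dot3 x y) := by
  have := dot3_self_of_norm3_eq_one hx
  have := dot3_self_of_norm3_eq_one hy
  simp only [dot3, Pi.add_apply] at *
  linarith

theorem dot3_sub_self_of_unit {x y : Fin 3 → ℝ} (hx : norm3 x = 1) (hy : norm3 y = 1) :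
    dot3 (x - y) (x - y) = 2 * (1 - dot3 x y) := by
  have := dot3_self_of_norm3_eq_one hx
  have := dot3_self_of_norm3_eq_one hy
  simp only [dot3, Pi.sub_apply] at *
  linarith

theorem max_norm3_sub_norm3_add (u a : Fin 3 → ℝ) :
    max (norm3 (u - a)) (norm3 (u + a)) = √(dot3 u u + norm3 a ^ 2 + 2 * |dot3 u a|) := by
  have hsub : dot3 (u - a) (u - a) = dot3 u u + dot3 a a - 2 * dot3 u a := by
    simp only [dot3, Pi.sub_apply]; ring
  have hadd : dot3 (u + a) (u + a) = dot3 u u + dot3 a a + 2 * dot3 u a := by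
    simp only [dot3, Pi.add_apply]; ring
  have hmax : max (dot3 u u + dot3 a a - 2 * dot3 u a) (dot3 u u + dot3 a a + 2 * dot3 u a) =
      dot3 u u + dot3 a a + 2 * |dot3 u a| := by
    rcases abs_cases (dot3 u a) with ⟨h, hs⟩ | ⟨h, hs⟩ <;> rw [h]
    · exact max_eq_right (by linarith)
    · rw [max_eq_left (by linarith)]; ring
  rw [norm3, norm3, ← Real.sqrt_monotone.map_max, hsub, hadd, hmax, norm3,
    Real.sq_sqrt (dot3_self_nonneg a)]

/-- The four matrices of the parametric joint-measurement family are all qubit effects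
iff √(2η²(1 + nᵢ·nⱼ) + |a|² + 2η|(nᵢ+nⱼ)·a|) ≤ α ≤
2 - √(2η²(1 - nᵢ·nⱼ) + |a|² + 2η|(nᵢ-nⱼ)·a|). -/
theorem parametric_family_effects_iff
    (ni nj : Fin 3 → ℝ) (hi : norm3 ni = 1) (hj : norm3 nj = 1)
    (η : ℝ) (hη : η ∈ Set.Icc (0 : ℝ) 1) (α : ℝ) (a : Fin 3 → ℝ) :
    (IsEffect (Gpp η ni nj α a) ∧ IsEffect (Gpm η ni nj α a) ∧
     IsEffect (Gmp η ni nj α a) ∧ IsEffect (Gmm η ni nj α a)) ↔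
    (Real.sqrt (2*η^2*(1 + dot3 ni nj) + (norm3 a)^2 + 2*η*|dot3 (ni + nj) a|) ≤ α ∧
     α ≤ 2 - Real.sqrt (2*η^2*(1 - dot3 ni nj) + (norm3 a)^2 + 2*η*|dot3 (ni - nj) a|)) := by
  have hplus : max (norm3 (η • (ni + nj) - a)) (norm3 (η • (ni + nj) + a)) =
      √(2*η^2*(1 + dot3 ni nj) + (norm3 a)^2 + 2*η*|dot3 (ni + nj) a|) := by
    rw [max_norm3_sub_norm3_add, dot3_smul_left, dot3_smul_right, dot3_smul_left, abs_mul,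
      abs_of_nonneg hη.1, dot3_add_self_of_unit hi hj]
    ring_nf
  have hminus : max (norm3 (η • (ni - nj) - a)) (norm3 (η • (ni - nj) + a)) =
      √(2*η^2*(1 - dot3 ni nj) + (norm3 a)^2 + 2*η*|dot3 (ni - nj) a|) := by
    rw [max_norm3_sub_norm3_add, dot3_smul_left, dot3_smul_right, dot3_smul_left, abs_mul,
      abs_of_nonneg hη.1, dot3_sub_self_of_unit hi hj]
    ring_nf
  have hGmp : -(η • ni) + η • nj + a = -(η • (ni - nj) - a) := by module
  have hGmm : -(η • (ni + nj)) - a = -(η • (ni + nj) + a) := by abel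
  simp only [Gpp, Gpm, Gmp, Gmm, hGmp, hGmm, isEffect_half_smul_pauli_half_iff, norm3_neg,
    ← hplus, ← hminus]
  have := norm3_nonneg (η • (ni + nj) - a)
  have := norm3_nonneg (η • (ni - nj) - a)
  constructor
  · rintro ⟨⟨hpp, -⟩, ⟨hpm, -⟩, ⟨hmp, -⟩, hmm, -⟩
    exact ⟨max_le (by linarith) (by linarith),
      le_sub_comm.mp (max_le (by linarith) (by linarith))⟩
  · rintro ⟨hP, hM⟩
    obtain ⟨hpp, hmm⟩ := max_le_iff.mp hP
    obtain ⟨hmp, hpm⟩ := max_le_iff.mp (le_sub_comm.mp hM)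
    refine ⟨⟨?_, ?_⟩, ⟨?_, ?_⟩, ⟨?_, ?_⟩, ?_, ?_⟩ <;> linarith

end
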